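/- The function u(x,t) = ((t(4i+t) + x(2+x) − 2)/(2(2 + t² + x(2+x)))) · e^{−it/2} is a solution of the focusing nonlinear Schrödinger equation i u_t = u_{xx} + 2 u |u|², and its denominator 2 + t² + x(2+x) = 1 + t² + (1+x)² is strictly positive for all real x, t. -/

import Mathlib

/-!
Completing the square, `u14 x t = A x t * exp (-i t / 2)` with the Peregrine amplitude
`A x t = 1/2 - 2 (1 - i t) / (1 + t² + (1 + x)²)`. As the phase has modulus one, the equation for
`u14` reduces to `i (∂ₜA - i A / 2) = ∂ₓₓA + 2 A² conj A`, a rational identity in `x, t` and `i`.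
The derivatives are computed for holomorphic functions on `ℂ` and restricted to the real line.
-/

noncomputable def u14 (x t : ℝ) : ℂ :=
  (((t : ℂ) * (4 * Complex.I + (t : ℂ)) + (x : ℂ) * (2 + (x : ℂ)) - 2) /
      (2 * (2 + (t : ℂ) ^ 2 + (x : ℂ) * (2 + (x : ℂ))))) *
    Complex.exp (-Complex.I * (t : ℂ) / 2)

open Complex

section
variable {𝕜 : Type*} [NontriviallyNormedField 𝕜] {a z : 𝕜}

lemma hasDerivAt_div_add_sq (c : 𝕜) (h : a + z ^ 2 ≠ 0) :
    HasDerivAt (fun z => c / (a + z ^ 2)) (-(2 * c * z) / (a + z ^ 2) ^ 2) z := by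
  refine ((hasDerivAt_const z c).fun_div ((hasDerivAt_pow 2 z).const_add a) h).congr_deriv ?_
  norm_num
  ring

lemma hasDerivAt_mul_div_add_sq_sq (c : 𝕜) (h : a + z ^ 2 ≠ 0) :
    HasDerivAt (fun z => c * z / (a + z ^ 2) ^ 2) (c * (a - 3 * z ^ 2) / (a + z ^ 2) ^ 3) z := by
  refine (((hasDerivAt_id z).const_mul c).fun_div
    (((hasDerivAt_pow 2 z).const_add a).fun_pow 2) (pow_ne_zero 2 h)).congr_deriv ?_
  norm_num
  field_simp
  ring

end

lemma peregrine_den_pos (x t : ℝ) : 0 < 1 + t ^ 2 + (1 + x) ^ 2 := by positivity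

lemma peregrine_den_ne_zero (x t : ℝ) : 1 + (t : ℂ) ^ 2 + (1 + x) ^ 2 ≠ 0 := by
  exact_mod_cast (peregrine_den_pos x t).ne'

lemma u14_eq (x t : ℝ) :
    u14 x t = (1 / 2 - 2 * (1 - I * t) / (1 + (t : ℂ) ^ 2 + (1 + x) ^ 2)) * exp (-I * t / 2) := by
  have hQ := peregrine_den_ne_zero x t
  have hQ' : 2 + (t : ℂ) ^ 2 + x * (2 + x) ≠ 0 := by
    convert hQ using 1
    ring
  rw [u14]
  congr 1
  field_simp
  ring

lemma hasDerivAt_u14_x (x t : ℝ) :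
    HasDerivAt (fun x' => u14 x' t)
      (4 * (1 - I * t) * (1 + x) / (1 + (t : ℂ) ^ 2 + (1 + x) ^ 2) ^ 2 * exp (-I * t / 2)) x := by
  simp only [u14_eq]
  have h := (hasDerivAt_div_add_sq (2 * (1 - I * t)) (peregrine_den_ne_zero x t)).comp_const_add
    1 (x : ℂ)
  refine (((h.const_sub (1 / 2)).mul_const (exp (-I * t / 2))).comp_ofReal).congr_deriv ?_
  ring

lemma hasDerivAt_deriv_u14_x (x t : ℝ) :
    HasDerivAt (deriv fun x' => u14 x' t)
      (4 * (1 - I * t) * (1 + t ^ 2 - 3 * (1 + x) ^ 2) / (1 + (t : ℂ) ^ 2 + (1 + x) ^ 2) ^ 3 *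
        exp (-I * t / 2)) x := by
  rw [funext fun y => (hasDerivAt_u14_x y t).deriv]
  have h := (hasDerivAt_mul_div_add_sq_sq (4 * (1 - I * t))
    (peregrine_den_ne_zero x t)).comp_const_add 1 (x : ℂ)
  exact (h.mul_const (exp (-I * t / 2))).comp_ofReal

lemma hasDerivAt_u14_t (x t : ℝ) :
    HasDerivAt (fun t' => u14 x t')
      (((2 * I * (1 + t ^ 2 + (1 + x) ^ 2) + 4 * t * (1 - I * t)) /
            (1 + (t : ℂ) ^ 2 + (1 + x) ^ 2) ^ 2
          - I / 2 * (1 / 2 - 2 * (1 - I * t) / (1 + (t : ℂ) ^ 2 + (1 + x) ^ 2))) *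
        exp (-I * t / 2)) t := by
  simp only [u14_eq]
  have hw := hasDerivAt_id (t : ℂ)
  have hA := ((hw.const_mul I).const_sub 1 |>.const_mul 2).fun_div
    ((hw.fun_pow 2 |>.const_add 1).add_const ((1 + (x : ℂ)) ^ 2)) (peregrine_den_ne_zero x t)
  have hE := ((hw.const_mul (-I)).div_const 2).cexp
  refine (((hA.const_sub (1 / 2)).fun_mul hE).comp_ofReal).congr_deriv ?_
  simp only [id]
  field_simp
  ring

lemma conj_u14 (x t : ℝ) :
    starRingEnd ℂ (u14 x t) =
      (1 / 2 - 2 * (1 + I * t) / (1 + (t : ℂ) ^ 2 + (1 + x) ^ 2)) * exp (I * t / 2) := by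
  rw [u14_eq, map_mul, ← exp_conj]
  simp [map_ofNat]

lemma peregrine_amplitude_identity (s t : ℂ) (hQ : 1 + t ^ 2 + s ^ 2 ≠ 0) :
    I * ((2 * I * (1 + t ^ 2 + s ^ 2) + 4 * t * (1 - I * t)) / (1 + t ^ 2 + s ^ 2) ^ 2
        - I / 2 * (1 / 2 - 2 * (1 - I * t) / (1 + t ^ 2 + s ^ 2))) =
      4 * (1 - I * t) * (1 + t ^ 2 - 3 * s ^ 2) / (1 + t ^ 2 + s ^ 2) ^ 3
        + 2 * (1 / 2 - 2 * (1 - I * t) / (1 + t ^ 2 + s ^ 2)) ^ 2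
          * (1 / 2 - 2 * (1 + I * t) / (1 + t ^ 2 + s ^ 2)) := by
  field_simp
  ring_nf
  simp only [I_sq, I_pow_three]
  ring

theorem stmt14 :
    (∀ x t : ℝ, 0 < 2 + t ^ 2 + x * (2 + x)) ∧
    ∀ x t : ℝ,
      Complex.I * deriv (fun t' => u14 x t') t =
        iteratedDeriv 2 (fun x' => u14 x' t) x
          + 2 * u14 x t * (u14 x t * (starRingEnd ℂ) (u14 x t)) := by
  refine ⟨fun x t => (peregrine_den_pos x t).trans_eq (by ring), fun x t => ?_⟩
  rw [(hasDerivAt_u14_t x t).deriv, iteratedDeriv_succ, iteratedDeriv_one,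
    (hasDerivAt_deriv_u14_x x t).deriv, conj_u14, u14_eq]
  have hE : exp (-I * t / 2) * exp (I * t / 2) = 1 := by
    rw [← exp_add, neg_mul, neg_div, neg_add_cancel, exp_zero]
  linear_combination exp (-I * t / 2) *
      peregrine_amplitude_identity (1 + x) t (peregrine_den_ne_zero x t) -
    2 * (1 / 2 - 2 * (1 - I * t) / (1 + (t : ℂ) ^ 2 + (1 + x) ^ 2)) ^ 2 *
      (1 / 2 - 2 * (1 + I * t) / (1 + (t : ℂ) ^ 2 + (1 + x) ^ 2)) * exp (-I * t / 2) * hE
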